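/- Uniqueness of the Vandermonde generators: Let X ∈ ℂ^{I₁×I₂×I₃} admit two CPDs with factor matrix triples (B⁽¹⁾, B⁽²⁾, B⁽³⁾) and (C⁽¹⁾, C⁽²⁾, C⁽³⁾), each with Q columns, where B⁽³⁾ is Vandermonde with pairwise distinct generators z₁,…,z_Q and C⁽³⁾ is Vandermonde with pairwise distinct generators w₁,…,w_Q. Suppose there exist positive integers K₃, L₃ with K₃ + L₃ = I₃ + 1 such that rank(B⁽³⁾⁽ᴷ³⁻¹⁾ ⊙ B⁽²⁾) = Q and rank(B⁽³⁾⁽ᴸ³⁾ ⊙ B⁽¹⁾) = Q. Then {z₁,…,z_Q} = {w₁,…,w_Q} as sets; i.e., there is a permutation σ of {1,…,Q} with w_q = z_{σ(q)} for all q. -/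

import Mathlib

open Matrix

noncomputable section

/-- `X` admits a CPD with factor matrices `B1`, `B2`, `B3`. -/
def IsCPD {I₁ I₂ I₃ Q : ℕ} (X : Fin I₁ → Fin I₂ → Fin I₃ → ℂ)
    (B1 : Matrix (Fin I₁) (Fin Q) ℂ) (B2 : Matrix (Fin I₂) (Fin Q) ℂ)
    (B3 : Matrix (Fin I₃) (Fin Q) ℂ) : Prop :=
  ∀ i j k, X i j k = ∑ q, B1 i q * B2 j q * B3 k q

/-- `B` is a Vandermonde matrix with generators `z`: `B_{k,q} = z_q^{k-1}`
(with 1-based row index `k`, i.e. exponent `k` for the 0-based index). -/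
def IsVandermonde {K Q : ℕ} (B : Matrix (Fin K) (Fin Q) ℂ) (z : Fin Q → ℂ) : Prop :=
  ∀ k q, B k q = z q ^ (k : ℕ)

/-- The Khatri-Rao (columnwise Kronecker) product: the row indexed by `(i, j)`
corresponds to row `(i-1)J + j` in 1-based linear indexing. -/
def khatriRao {I J Q : ℕ} (A : Matrix (Fin I) (Fin Q) ℂ)
    (B : Matrix (Fin J) (Fin Q) ℂ) : Matrix (Fin I × Fin J) (Fin Q) ℂ :=
  Matrix.of fun p q => A p.1 q * B p.2 q

/-- The submatrix consisting of the first `m` rows of `A`. -/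
def firstRows {K Q : ℕ} (A : Matrix (Fin K) (Fin Q) ℂ) (m : ℕ) (h : m ≤ K) :
    Matrix (Fin m) (Fin Q) ℂ :=
  Matrix.of fun i q => A (Fin.castLE h i) q

/-! Both decompositions produce the same Hankel-structured unfolding
`(k, j), (l, i) ↦ X i j (k + l)`, which factors as `E Fᵀ = G Hᵀ`, with `E`, `G` the Khatri-Rao
products of the first `K₃` Vandermonde rows with the second factor and `F`, `H` those of the
first `L₃` rows with the first factor. Full column rank of `F` and of the top block of `E` gives
`G = E M` with `M` invertible. Dropping the first block row of a Vandermonde-Khatri-Rao matrix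
amounts to multiplying its top block by the diagonal of the generators, so comparing shifts of
`G = E M` yields `diag z * M = M * diag w`. A nonzero entry of each column of `M` then matches
each `w q` with some `z r`, and injectivity of `w` makes this matching a permutation. -/

namespace Matrix

theorem submatrix_rows_mul {α l m n p : Type*} [Fintype n] [Mul α] [AddCommMonoid α]
    (A : Matrix m n α) (B : Matrix n p α) (r : l → m) :
    (A * B).submatrix r id = A.submatrix r id * B :=
  rfl

variable {K R m n p m' : Type*} [Fintype n] [DecidableEq n]

theorem exists_mul_eq_one_of_rank_eq_card [Field K] [Fintype m] [DecidableEq m]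
    {A : Matrix m n K} (h : A.rank = Fintype.card n) :
    ∃ L : Matrix n m K, L * A = 1 := by
  have hker : LinearMap.ker A.mulVecLin = ⊥ := by
    have := LinearMap.finrank_range_add_finrank_ker A.mulVecLin
    rw [← Matrix.rank, h, Module.finrank_fintype_fun_eq_card, Nat.add_eq_left] at this
    exact Submodule.finrank_eq_zero.mp this
  obtain ⟨g, hg⟩ := A.mulVecLin.exists_leftInverse_of_injective hker
  refine ⟨LinearMap.toMatrix' g, toLin'.injective ?_⟩
  rw [toLin'_mul, toLin'_toMatrix', toLin'_one]
  exact hg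

theorem exists_isUnit_eq_mul_of_mul_transpose_eq [CommRing R] [Fintype p] [Fintype m']
    {E G : Matrix m n R} {F H : Matrix p n R} (hEF : E * Fᵀ = G * Hᵀ) {L : Matrix n p R}
    (hL : L * F = 1) (r : m' → m) {L' : Matrix n m' R} (hL' : L' * E.submatrix r id = 1) :
    ∃ M : Matrix n n R, IsUnit M ∧ G = E * M := by
  have hEGN : E = G * (Hᵀ * Lᵀ) := by
    rw [← Matrix.mul_assoc, ← hEF, Matrix.mul_assoc, ← transpose_mul, hL, transpose_one,
      Matrix.mul_one]
  have hMN : L' * G.submatrix r id * (Hᵀ * Lᵀ) = 1 := by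
    rw [Matrix.mul_assoc, ← submatrix_rows_mul, ← hEGN, hL']
  refine ⟨L' * G.submatrix r id, ?_, ?_⟩
  · exact (isUnit_iff_isUnit_det _).2 (isUnit_det_of_right_inverse hMN)
  · rw [hEGN, Matrix.mul_assoc, mul_eq_one_comm.mp hMN, Matrix.mul_one]

theorem exists_eq_of_diagonal_mul_eq_mul_diagonal [CommRing R] [IsDomain R]
    {M : Matrix n n R} (hM : IsUnit M) {z w : n → R} (h : diagonal z * M = M * diagonal w)
    (q : n) : ∃ r, z r = w q := by
  by_contra! hne
  have hcol : ∀ r, M r q = 0 := fun r => by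
    have := congrFun (congrFun h r) q
    rw [diagonal_mul, mul_diagonal] at this
    exact (mul_eq_zero.mp (by linear_combination this)).resolve_left (sub_ne_zero.mpr (hne r))
  exact ((isUnit_iff_isUnit_det M).1 hM).ne_zero (det_eq_zero_of_column_eq_zero q hcol)

end Matrix

open Matrix

theorem isVandermonde_firstRows {K Q : ℕ} {B : Matrix (Fin K) (Fin Q) ℂ} {z : Fin Q → ℂ}
    (hB : IsVandermonde B z) (m : ℕ) (h : m ≤ K) : IsVandermonde (firstRows B m h) z :=
  fun k q => hB (Fin.castLE h k) q

def hankelUnfolding {I₁ I₂ I₃ : ℕ} (X : Fin I₁ → Fin I₂ → Fin I₃ → ℂ) (K L : ℕ)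
    (h : K + L ≤ I₃ + 1) : Matrix (Fin K × Fin I₂) (Fin L × Fin I₁) ℂ :=
  of fun p r => X r.2 p.2 ⟨p.1 + r.1, by omega⟩

theorem IsCPD.khatriRao_mul_transpose_khatriRao {I₁ I₂ I₃ Q : ℕ}
    {X : Fin I₁ → Fin I₂ → Fin I₃ → ℂ} {A1 : Matrix (Fin I₁) (Fin Q) ℂ}
    {A2 : Matrix (Fin I₂) (Fin Q) ℂ} {A3 : Matrix (Fin I₃) (Fin Q) ℂ} (hX : IsCPD X A1 A2 A3)
    {z : Fin Q → ℂ} (hA3 : IsVandermonde A3 z) {K L : ℕ} (hK : K ≤ I₃) (hL : L ≤ I₃)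
    (hKL : K + L ≤ I₃ + 1) :
    khatriRao (firstRows A3 K hK) A2 * (khatriRao (firstRows A3 L hL) A1)ᵀ =
      hankelUnfolding X K L hKL := by
  ext p r
  rw [hankelUnfolding, of_apply, hX, mul_apply]
  refine Finset.sum_congr rfl fun q _ => ?_
  simp only [transpose_apply, khatriRao, firstRows, of_apply, hA3 _ q, Fin.val_castLE, pow_add]
  ring

theorem IsVandermonde.khatriRao_submatrix_succ {m I Q : ℕ} {V : Matrix (Fin (m + 1)) (Fin Q) ℂ}
    {z : Fin Q → ℂ} (hV : IsVandermonde V z) (B : Matrix (Fin I) (Fin Q) ℂ) :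
    (khatriRao V B).submatrix (Prod.map Fin.succ id) id =
      khatriRao (firstRows V m m.le_succ) B * diagonal z := by
  ext p q
  simp only [submatrix_apply, mul_diagonal, khatriRao, firstRows, of_apply, Prod.map_fst,
    Prod.map_snd, id]
  rw [hV, hV, Fin.val_succ, Fin.val_castLE, pow_succ]
  ring

theorem IsVandermonde.diagonal_mul_eq_mul_diagonal {m I Q : ℕ}
    {V W : Matrix (Fin (m + 1)) (Fin Q) ℂ} {z w : Fin Q → ℂ} (hV : IsVandermonde V z)
    (hW : IsVandermonde W w) {B C : Matrix (Fin I) (Fin Q) ℂ} {M : Matrix (Fin Q) (Fin Q) ℂ}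
    (hM : khatriRao W C = khatriRao V B * M) {L : Matrix (Fin Q) (Fin m × Fin I) ℂ}
    (hL : L * khatriRao (firstRows V m m.le_succ) B = 1) :
    diagonal z * M = M * diagonal w := by
  set U := khatriRao (firstRows V m m.le_succ) B
  have top : khatriRao (firstRows W m m.le_succ) C = U * M :=
    congrArg (·.submatrix (Prod.map (Fin.castLE m.le_succ) id) id) hM
  have bottom : U * M * diagonal w = U * diagonal z * M := by
    have := congrArg (·.submatrix (Prod.map Fin.succ id) id) hM
    simpa only [hW.khatriRao_submatrix_succ, top, submatrix_rows_mul,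
      hV.khatriRao_submatrix_succ] using this
  calc diagonal z * M = L * (U * diagonal z * M) := by
        rw [Matrix.mul_assoc U, ← Matrix.mul_assoc L, hL, Matrix.one_mul]
    _ = M * diagonal w := by
        rw [← bottom, Matrix.mul_assoc U, ← Matrix.mul_assoc L, hL, Matrix.one_mul]

/-- Uniqueness of the Vandermonde generators: if `X` admits two CPDs whose
third factor matrices are Vandermonde with pairwise distinct generators, and
the first decomposition satisfies the rank conditions, then the two sets of
generators coincide up to a permutation. -/
theorem vandermonde_generator_uniqueness {I₁ I₂ I₃ Q : ℕ}
    (X : Fin I₁ → Fin I₂ → Fin I₃ → ℂ)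
    (B1 : Matrix (Fin I₁) (Fin Q) ℂ) (B2 : Matrix (Fin I₂) (Fin Q) ℂ)
    (B3 : Matrix (Fin I₃) (Fin Q) ℂ)
    (C1 : Matrix (Fin I₁) (Fin Q) ℂ) (C2 : Matrix (Fin I₂) (Fin Q) ℂ)
    (C3 : Matrix (Fin I₃) (Fin Q) ℂ)
    (hB : IsCPD X B1 B2 B3) (hC : IsCPD X C1 C2 C3)
    (z : Fin Q → ℂ) (hVz : IsVandermonde B3 z)
    (w : Fin Q → ℂ) (hVw : IsVandermonde C3 w) (hw : Function.Injective w)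
    (K₃ L₃ : ℕ) (hK₃ : 1 ≤ K₃) (hL₃ : 1 ≤ L₃) (hsum : K₃ + L₃ = I₃ + 1)
    (hrank1 : (khatriRao (firstRows B3 (K₃ - 1) (by omega)) B2).rank = Q)
    (hrank2 : (khatriRao (firstRows B3 L₃ (by omega)) B1).rank = Q) :
    ∃ σ : Equiv.Perm (Fin Q), ∀ q, w q = z (σ q) := by
  obtain ⟨m, rfl⟩ : ∃ m, K₃ = m + 1 := ⟨K₃ - 1, by omega⟩
  have hKle : m + 1 ≤ I₃ := by omega
  have hLle : L₃ ≤ I₃ := by omega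
  have hankel := (hB.khatriRao_mul_transpose_khatriRao hVz hKle hLle hsum.le).trans
    (hC.khatriRao_mul_transpose_khatriRao hVw hKle hLle hsum.le).symm
  obtain ⟨L, hL⟩ := exists_mul_eq_one_of_rank_eq_card (hrank2.trans (Fintype.card_fin Q).symm)
  obtain ⟨L', hL'⟩ := exists_mul_eq_one_of_rank_eq_card (hrank1.trans (Fintype.card_fin Q).symm)
  -- `m + 1 - 1` reduces to `m`, so `hL'` is a left inverse of the top block row of `E`.
  obtain ⟨M, hMunit, hCB⟩ :=
    exists_isUnit_eq_mul_of_mul_transpose_eq hankel hL (Prod.map (Fin.castLE m.le_succ) id) hL'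
  have hshift := (isVandermonde_firstRows hVz _ hKle).diagonal_mul_eq_mul_diagonal
    (isVandermonde_firstRows hVw _ hKle) hCB hL'
  choose f hf using exists_eq_of_diagonal_mul_eq_mul_diagonal hMunit hshift
  have hf_inj : Function.Injective f := fun a b hab => hw (by rw [← hf a, ← hf b, hab])
  exact ⟨Equiv.ofBijective f (Finite.injective_iff_bijective.mp hf_inj), fun q => (hf q).symm⟩
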